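/- arXiv:1706.07351 — 8 statements merged into one kernel-verified Lean document; each statement's English description precedes it below -/
import Mathlib

section
/- Let a, y, M, δ be real numbers such that δ = 0 or δ = 1, and suppose y ≥ a, y ≤ a + M·δ, y ≥ 0, and y ≤ M·(1 − δ). Then y = max(a, 0), i.e., y equals ReLU(a). -/
/-- ReLU(t) = max(t, 0). -/
noncomputable def ReLU (t : ℝ) : ℝ := max t 0

/-- If the big-M constraints for a single ReLU neuron hold with binary δ,
then the output y equals ReLU of the pre-activation a. -/
theorem bigM_single_neuron_sound (a y M δ : ℝ)
    (hδ : δ = 0 ∨ δ = 1)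
    (h1 : y ≥ a) (h2 : y ≤ a + M * δ) (h3 : y ≥ 0) (h4 : y ≤ M * (1 - δ)) :
    y = ReLU a := by
  unfold ReLU
  rcases hδ with h | h <;> subst h <;> simp at h2 h4
  · rw [max_eq_left (by linarith)]; linarith
  · rw [max_eq_right (by linarith)]; linarith
end

section
/- Let a, y, M be real numbers with |a| ≤ M. Then y = max(a, 0) if and only if there exists a real number δ with (δ = 0 or δ = 1) such that y ≥ a, y ≤ a + M·δ, y ≥ 0, and y ≤ M·(1 − δ). -/
/-- For |a| ≤ M, y = ReLU(a) iff the big-M constraints for a single ReLU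
neuron are satisfiable with a binary δ. -/
theorem bigM_single_neuron_iff (a y M : ℝ) (hM : |a| ≤ M) :
    y = ReLU a ↔
      ∃ δ : ℝ, (δ = 0 ∨ δ = 1) ∧
        y ≥ a ∧ y ≤ a + M * δ ∧ y ≥ 0 ∧ y ≤ M * (1 - δ) := by
  rw [abs_le] at hM
  constructor
  · intro hy
    rcases le_or_gt a 0 with h | h
    · refine ⟨1, Or.inr rfl, ?_⟩
      simp [hy, ReLU, max_eq_right h]
      constructor <;> linarith [hM.1]
    · refine ⟨0, Or.inl rfl, ?_⟩
      simp [hy, ReLU, max_eq_left h.le]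
      exact ⟨h.le, hM.2⟩
  · rintro ⟨δ, (rfl | rfl), h1, h2, h3, h4⟩ <;> simp at h2 h4
    · have : y = a := le_antisymm h2 h1
      simp [ReLU, this, max_eq_left (this ▸ h3)]
    · have : y = 0 := le_antisymm h4 h3
      simp [ReLU, this, max_eq_right (by linarith : a ≤ 0)]
end

section
/- Let W be a real n × m matrix, b ∈ ℝⁿ, x ∈ ℝᵐ, y ∈ ℝⁿ, M ∈ ℝ, and δ ∈ ℝⁿ. Suppose for every index j: δⱼ = 0 or δⱼ = 1, yⱼ ≥ (W x)ⱼ + bⱼ, yⱼ ≤ (W x)ⱼ + bⱼ + M·δⱼ, yⱼ ≥ 0, and yⱼ ≤ M·(1 − δⱼ). Then for every j, yⱼ = max((W x)ⱼ + bⱼ, 0); that is, y is the output of the ReLU layer with weight matrix W and bias vector b applied to input x. -/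
/-- If the big-M constraints encoding a ReLU layer hold with binary
indicators δ, then y is the output of the layer on input x. -/
theorem bigM_layer_sound {n m : ℕ} (W : Matrix (Fin n) (Fin m) ℝ)
    (b : Fin n → ℝ) (x : Fin m → ℝ) (y : Fin n → ℝ) (M : ℝ) (δ : Fin n → ℝ)
    (hδ : ∀ j, δ j = 0 ∨ δ j = 1)
    (h1 : ∀ j, y j ≥ W.mulVec x j + b j)
    (h2 : ∀ j, y j ≤ W.mulVec x j + b j + M * δ j)
    (h3 : ∀ j, y j ≥ 0)
    (h4 : ∀ j, y j ≤ M * (1 - δ j)) :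
    ∀ j, y j = ReLU (W.mulVec x j + b j) := by
  intro j
  rcases hδ j with h | h
  · have := h2 j; have := h1 j
    simp [h] at *
    unfold ReLU
    have : y j = W.mulVec x j + b j := le_antisymm (by linarith) (by linarith)
    rw [this, max_eq_left (by linarith [h3 j, this])]
  · have hy : y j = 0 := le_antisymm (by have := h4 j; simp [h] at this; linarith) (h3 j)
    have : W.mulVec x j + b j ≤ 0 := by linarith [h1 j]
    simp [hy, ReLU, max_eq_right this]
end

section
/- Let W be a real n × m matrix, b ∈ ℝⁿ, x ∈ ℝᵐ, y ∈ ℝⁿ, and M ∈ ℝ, and suppose |(W x)ⱼ + bⱼ| ≤ M for every index j. Then y satisfies yⱼ = max((W x)ⱼ + bⱼ, 0) for all j if and only if there exists δ ∈ ℝⁿ such that for every j: δⱼ = 0 or δⱼ = 1, yⱼ ≥ (W x)ⱼ + bⱼ, yⱼ ≤ (W x)ⱼ + bⱼ + M·δⱼ, yⱼ ≥ 0, and yⱼ ≤ M·(1 − δⱼ). -/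
/-- For pre-activations bounded by M in absolute value, y is the output of
the ReLU layer on input x iff the big-M constraints encoding the layer are
satisfiable with binary indicators δ. -/
theorem bigM_layer_iff {n m : ℕ} (W : Matrix (Fin n) (Fin m) ℝ)
    (b : Fin n → ℝ) (x : Fin m → ℝ) (y : Fin n → ℝ) (M : ℝ)
    (hM : ∀ j, |W.mulVec x j + b j| ≤ M) :
    (∀ j, y j = ReLU (W.mulVec x j + b j)) ↔
      ∃ δ : Fin n → ℝ, ∀ j,
        (δ j = 0 ∨ δ j = 1) ∧
        y j ≥ W.mulVec x j + b j ∧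
        y j ≤ W.mulVec x j + b j + M * δ j ∧
        y j ≥ 0 ∧
        y j ≤ M * (1 - δ j) := by
  constructor
  · intro h
    refine ⟨fun j => if 0 ≤ W.mulVec x j + b j then 0 else 1, fun j => ?_⟩
    have hMj := hM j
    have h1 := abs_le.mp hMj
    have hy := h j
    unfold ReLU at hy
    by_cases hc : 0 ≤ W.mulVec x j + b j
    · simp only [if_pos hc]
      rw [max_eq_left hc] at hy
      refine ⟨Or.inl trivial, le_of_eq hy.symm, ?_, hy ▸ hc, ?_⟩ <;> · rw [hy]; linarith [h1.2]
    · simp only [if_neg hc]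
      push_neg at hc
      rw [max_eq_right hc.le] at hy
      exact ⟨Or.inr trivial, hy ▸ hc.le, by rw [hy]; linarith [h1.1], hy.ge, by rw [hy]; linarith⟩
  · rintro ⟨δ, hδ⟩ j
    obtain ⟨h01, h2, h3, h4, h5⟩ := hδ j
    unfold ReLU
    rcases h01 with h0 | h1
    · rw [h0] at h3; rw [max_eq_left (by linarith)]; linarith
    · rw [h1] at h5; rw [max_eq_right (by linarith)]; linarith
end

section
/- Let L ≥ 1 and let (W⁽¹⁾, b⁽¹⁾), …, (W⁽ᴸ⁾, b⁽ᴸ⁾) be the layers of a feed-forward ReLU network, where W⁽ⁱ⁾ is a real n_i × n_{i−1} matrix and b⁽ⁱ⁾ ∈ ℝ^{n_i}; let f : ℝ^{n_0} → ℝ^{n_L} be its computed function. Let I ⊆ ℝ^{n_0} and O ⊆ ℝ^{n_L}. Suppose there exist vectors x⁽⁰⁾ ∈ ℝ^{n_0}, …, x⁽ᴸ⁾ ∈ ℝ^{n_L}, vectors δ⁽¹⁾ ∈ ℝ^{n_1}, …, δ⁽ᴸ⁾ ∈ ℝ^{n_L}, and M ∈ ℝ such that x⁽⁰⁾ ∈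 I, x⁽ᴸ⁾ ∈ O, and for every i = 1,…,L and every index j: δ⁽ⁱ⁾ⱼ = 0 or δ⁽ⁱ⁾ⱼ = 1, x⁽ⁱ⁾ⱼ ≥ (W⁽ⁱ⁾ x⁽ⁱ⁻¹⁾)ⱼ + b⁽ⁱ⁾ⱼ, x⁽ⁱ⁾ⱼ ≤ (W⁽ⁱ⁾ x⁽ⁱ⁻¹⁾)ⱼ + b⁽ⁱ⁾ⱼ + M·δ⁽ⁱ⁾ⱼ, x⁽ⁱ⁾ⱼ ≥ 0, and x⁽ⁱ⁾ⱼ ≤ M·(1 − δ⁽ⁱ⁾ⱼ). Then O is reachable from I through the network, i.e., there exists x ∈ I with f(x) ∈ O. -/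
/-- The function computed by the first `k` layers of a feed-forward ReLU
network whose `i`-th layer has weight matrix `W i` and bias vector `b i`. -/
noncomputable def forward (n : ℕ → ℕ)
    (W : ∀ i : ℕ, Matrix (Fin (n (i + 1))) (Fin (n i)) ℝ)
    (b : ∀ i : ℕ, Fin (n (i + 1)) → ℝ) :
    ∀ k : ℕ, (Fin (n 0) → ℝ) → (Fin (n k) → ℝ)
  | 0 => fun x => x
  | k + 1 => fun x j => ReLU ((W k).mulVec (forward n W b k x) j + b k j)

/-- Soundness of the big-M MILP encoding of reachability: a feasible solution
of the linear program yields an input in I whose network output lies in O. -/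
theorem bigM_reachability_sound (L : ℕ) (hL : 1 ≤ L) (n : ℕ → ℕ)
    (W : ∀ i : ℕ, Matrix (Fin (n (i + 1))) (Fin (n i)) ℝ)
    (b : ∀ i : ℕ, Fin (n (i + 1)) → ℝ)
    (I : Set (Fin (n 0) → ℝ)) (O : Set (Fin (n L) → ℝ))
    (x : ∀ i : ℕ, Fin (n i) → ℝ)
    (δ : ∀ i : ℕ, Fin (n (i + 1)) → ℝ) (M : ℝ)
    (hI : x 0 ∈ I) (hO : x L ∈ O)
    (hδ : ∀ i < L, ∀ j, δ i j = 0 ∨ δ i j = 1)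
    (h1 : ∀ i < L, ∀ j, x (i + 1) j ≥ (W i).mulVec (x i) j + b i j)
    (h2 : ∀ i < L, ∀ j, x (i + 1) j ≤ (W i).mulVec (x i) j + b i j + M * δ i j)
    (h3 : ∀ i < L, ∀ j, x (i + 1) j ≥ 0)
    (h4 : ∀ i < L, ∀ j, x (i + 1) j ≤ M * (1 - δ i j)) :
    ∃ x₀ ∈ I, forward n W b L x₀ ∈ O := by
  refine ⟨x 0, hI, ?_⟩
  have key : ∀ k ≤ L, forward n W b k (x 0) = x k := by
    intro k hk
    induction k with
    | zero => rfl
    | succ i ih =>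
      have hi : i < L := hk
      have ih' := ih (le_of_lt hi)
      funext j
      have pre := h1 i hi j
      have post := h2 i hi j
      have nn := h3 i hi j
      have up := h4 i hi j
      simp only [forward, ih', ReLU]
      rcases hδ i hi j with h0 | h0
      · have : x (i + 1) j = (W i).mulVec (x i) j + b i j := by
          rw [h0] at post; linarith
        rw [← this]
        exact max_eq_left nn
      · have hx0 : x (i + 1) j = 0 := by rw [h0] at up; simp at up; linarith
        have : (W i).mulVec (x i) j + b i j ≤ 0 := by linarith
        rw [hx0, max_eq_right this]
  rw [key L le_rfl]
  exact hO
end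

section
/- Let L ≥ 1 and let (W⁽¹⁾, b⁽¹⁾), …, (W⁽ᴸ⁾, b⁽ᴸ⁾) be the layers of a feed-forward ReLU network, where W⁽ⁱ⁾ is a real n_i × n_{i−1} matrix and b⁽ⁱ⁾ ∈ ℝ^{n_i}; let f : ℝ^{n_0} → ℝ^{n_L} be its computed function. Let I ⊆ ℝ^{n_0} and O ⊆ ℝ^{n_L} be linearly definable sets, i.e., I = {x : A x ≤ u} for some real p × n_0 matrix A and u ∈ ℝᵖ (inequalities componentwise) and O = {y : B y ≤ v} for some real q × n_L matrix B and v ∈ ℝ^q. Let M ∈ ℝ be such that for every x ∈ I, the chain z⁽⁰⁾ = x, z⁽ⁱ⁾ = ReLU(W⁽ⁱ⁾ z⁽ⁱ⁻¹⁾ + b⁽ⁱ⁾) satisfies |(W⁽ⁱ⁾ z⁽ⁱ⁻¹⁾)ⱼ + b⁽ⁱ⁾ⱼ| ≤ M for every i = 1,…,L and every j. Then O is reachable from I through the network (i.e., there exists x ∈ I with f(x) ∈ O) if and only if the following mixed-integer linear system is feasible: there exist vectors x⁽⁰⁾ ∈ ℝ^{n_0}, …, x⁽ᴸ⁾ ∈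 ℝ^{n_L} and δ⁽¹⁾ ∈ ℝ^{n_1}, …, δ⁽ᴸ⁾ ∈ ℝ^{n_L} with A x⁽⁰⁾ ≤ u, B x⁽ᴸ⁾ ≤ v, and for every i = 1,…,L and every index j: δ⁽ⁱ⁾ⱼ = 0 or δ⁽ⁱ⁾ⱼ = 1, x⁽ⁱ⁾ⱼ ≥ (W⁽ⁱ⁾ x⁽ⁱ⁻¹⁾)ⱼ + b⁽ⁱ⁾ⱼ, x⁽ⁱ⁾ⱼ ≤ (W⁽ⁱ⁾ x⁽ⁱ⁻¹⁾)ⱼ + b⁽ⁱ⁾ⱼ + M·δ⁽ⁱ⁾ⱼ, x⁽ⁱ⁾ⱼ ≥ 0, and x⁽ⁱ⁾ⱼ ≤ M·(1 − δ⁽ⁱ⁾ⱼ). -/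
/-- Equivalence between reachability for a feed-forward ReLU network on
linearly definable input and output sets and feasibility of the
corresponding big-M mixed integer linear program. -/
theorem bigM_reachability_iff (L : ℕ) (hL : 1 ≤ L) (n : ℕ → ℕ)
    (W : ∀ i : ℕ, Matrix (Fin (n (i + 1))) (Fin (n i)) ℝ)
    (b : ∀ i : ℕ, Fin (n (i + 1)) → ℝ)
    (p q : ℕ)
    (A : Matrix (Fin p) (Fin (n 0)) ℝ) (u : Fin p → ℝ)
    (B : Matrix (Fin q) (Fin (n L)) ℝ) (v : Fin q → ℝ)
    (M : ℝ)
    (hM : ∀ x : Fin (n 0) → ℝ, A.mulVec x ≤ u →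
      ∀ i < L, ∀ j, |(W i).mulVec (forward n W b i x) j + b i j| ≤ M) :
    (∃ x : Fin (n 0) → ℝ, A.mulVec x ≤ u ∧ B.mulVec (forward n W b L x) ≤ v) ↔
      (∃ x : ∀ i : ℕ, Fin (n i) → ℝ, ∃ δ : ∀ i : ℕ, Fin (n (i + 1)) → ℝ,
        A.mulVec (x 0) ≤ u ∧ B.mulVec (x L) ≤ v ∧
        ∀ i < L, ∀ j,
          (δ i j = 0 ∨ δ i j = 1) ∧
          x (i + 1) j ≥ (W i).mulVec (x i) j + b i j ∧
          x (i + 1) j ≤ (W i).mulVec (x i) j + b i j + M * δ i j ∧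
          x (i + 1) j ≥ 0 ∧
          x (i + 1) j ≤ M * (1 - δ i j)) := by
  constructor
  · rintro ⟨x₀, hA, hB⟩
    refine ⟨fun i => forward n W b i x₀,
      fun i j => if 0 ≤ (W i).mulVec (forward n W b i x₀) j + b i j then 0 else 1,
      hA, hB, ?_⟩
    intro i hi j
    beta_reduce
    have hMa := hM x₀ hA i hi j
    rw [abs_le] at hMa
    have hfwd : forward n W b (i + 1) x₀ j
        = ReLU ((W i).mulVec (forward n W b i x₀) j + b i j) := rfl
    by_cases h : 0 ≤ (W i).mulVec (forward n W b i x₀) j + b i j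
    · rw [if_pos h]
      have hr : ReLU ((W i).mulVec (forward n W b i x₀) j + b i j)
          = (W i).mulVec (forward n W b i x₀) j + b i j := max_eq_left h
      refine ⟨Or.inl rfl, ?_, ?_, ?_, ?_⟩ <;> rw [hfwd, hr] <;> linarith [hMa.2]
    · rw [if_neg h]
      push_neg at h
      have hr : ReLU ((W i).mulVec (forward n W b i x₀) j + b i j) = 0 :=
        max_eq_right h.le
      refine ⟨Or.inr rfl, ?_, ?_, ?_, ?_⟩ <;> rw [hfwd, hr] <;> linarith [hMa.1]
  · rintro ⟨x, δ, hA, hB, hcon⟩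
    have key : ∀ i, i ≤ L → x i = forward n W b i (x 0) := by
      intro i
      induction i with
      | zero => intro _; rfl
      | succ i ih =>
        intro hi
        have hih := ih (Nat.le_of_succ_le hi)
        funext j
        obtain ⟨hδ, h1, h2, h3, h4⟩ := hcon i (Nat.lt_of_succ_le hi) j
        have hfwd : forward n W b (i + 1) (x 0) j
            = ReLU ((W i).mulVec (forward n W b i (x 0)) j + b i j) := rfl
        rw [hfwd, ← hih]
        rcases hδ with h0 | h1'
        · rw [h0, mul_zero, add_zero] at h2
          have hx : x (i + 1) j = (W i).mulVec (x i) j + b i j := le_antisymm h2 h1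
          rw [hx, ReLU, max_eq_left]
          linarith
        · rw [h1'] at h4
          have hx : x (i + 1) j = 0 := le_antisymm (by linarith) h3
          rw [hx, ReLU, max_eq_right]
          linarith
    exact ⟨x 0, hA, by rw [← key L le_rfl]; exact hB⟩
end

section
/- Let a, y, M, δ, ε be real numbers with ε ≥ 0, δ = 0 or δ = 1, and suppose the ε-relaxed big-M constraints hold: y ≥ a − ε, y ≤ a + M·δ + ε, y ≥ 0, and y ≤ M·(1 − δ). Then |y − max(a, 0)| ≤ ε; in particular, if ε = 0 then y = ReLU(a) exactly. -/
/-- The ε-relaxed big-M constraints for a single ReLU neuron force the output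
to be within ε of ReLU of the pre-activation; in particular they are exact
when ε = 0. -/
theorem bigM_single_neuron_relaxed (a y M δ ε : ℝ)
    (hε : ε ≥ 0) (hδ : δ = 0 ∨ δ = 1)
    (h1 : y ≥ a - ε) (h2 : y ≤ a + M * δ + ε) (h3 : y ≥ 0) (h4 : y ≤ M * (1 - δ)) :
    |y - ReLU a| ≤ ε ∧ (ε = 0 → y = ReLU a) := by
  have key : |y - ReLU a| ≤ ε := by
    unfold ReLU
    rcases le_or_gt a 0 with ha | ha <;>
      [rw [max_eq_right ha]; rw [max_eq_left ha.le]] <;>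
      rw [abs_le] <;>
      rcases hδ with h | h <;> subst h <;> constructor <;> nlinarith
  refine ⟨key, fun h => ?_⟩
  subst h
  have := abs_nonpos_iff.mp key
  linarith [sub_eq_zero.mp this]
end

section
/- Let W be a real n × m matrix, b ∈ ℝⁿ, x ∈ ℝᵐ, y ∈ ℝⁿ, M ∈ ℝ, δ ∈ ℝⁿ, and ε ∈ ℝⁿ with εⱼ ≥ 0 for all j. Suppose for every index j: δⱼ = 0 or δⱼ = 1, yⱼ ≥ (W x)ⱼ + bⱼ − εⱼ, yⱼ ≤ (W x)ⱼ + bⱼ + M·δⱼ + εⱼ, yⱼ ≥ 0, and yⱼ ≤ M·(1 − δⱼ). Then for every j, |yⱼ − max((W x)ⱼ + bⱼ, 0)| ≤ εⱼ; in particular, if Σⱼ εⱼ = 0 then y = ReLU(W x + b) exactly. -/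
/-- If the ε-relaxed big-M constraints encoding a ReLU layer hold with
binary indicators δ and non-negative tolerances ε, then each output entry is
within εⱼ of the exact ReLU output; in particular, exactness holds when the
tolerances sum to zero. -/
theorem bigM_layer_relaxed {n m : ℕ} (W : Matrix (Fin n) (Fin m) ℝ)
    (b : Fin n → ℝ) (x : Fin m → ℝ) (y : Fin n → ℝ) (M : ℝ)
    (δ : Fin n → ℝ) (ε : Fin n → ℝ)
    (hε : ∀ j, ε j ≥ 0)
    (hδ : ∀ j, δ j = 0 ∨ δ j = 1)
    (h1 : ∀ j, y j ≥ W.mulVec x j + b j - ε j)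
    (h2 : ∀ j, y j ≤ W.mulVec x j + b j + M * δ j + ε j)
    (h3 : ∀ j, y j ≥ 0)
    (h4 : ∀ j, y j ≤ M * (1 - δ j)) :
    (∀ j, |y j - ReLU (W.mulVec x j + b j)| ≤ ε j) ∧
      ((∑ j, ε j) = 0 → ∀ j, y j = ReLU (W.mulVec x j + b j)) := by
  have key : ∀ j, |y j - ReLU (W.mulVec x j + b j)| ≤ ε j := by
    intro j
    set a := W.mulVec x j + b j with ha
    have hεj := hε j
    have h1j := h1 j
    have h2j := h2 j
    have h3j := h3 j
    have h4j := h4 j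
    rcases hδ j with h | h
    · rw [h] at h2j
      unfold ReLU
      rcases le_total a 0 with hc | hc
      · rw [max_eq_right hc, abs_le]
        constructor <;> nlinarith
      · rw [max_eq_left hc, abs_le]
        constructor <;> nlinarith
    · rw [h] at h4j
      have hy0 : y j = 0 := le_antisymm (by linarith) h3j
      have haε : a ≤ ε j := by nlinarith
      unfold ReLU
      rw [hy0, abs_le]
      constructor
      · have := max_le haε hεj
        linarith
      · nlinarith [le_max_right a 0]
  refine ⟨key, fun hsum j => ?_⟩
  have : ε j = 0 :=
    (Finset.sum_eq_zero_iff_of_nonneg (fun i _ => hε i)).mp hsum j (Finset.mem_univ j)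
  have := key j
  rw [‹ε j = 0›] at this
  have := abs_nonpos_iff.mp this
  linarith
end
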